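/- Let W : X1 × X2 → Y be a MAC on finite alphabets and n a positive integer. For any joint probability distribution P_{X1^n X2^n} on X1^n × X2^n, let Y^n be the output of W^{⊗n} on inputs (X1^n, X2^n), i.e. the joint distribution of (X1^n, X2^n, Y^n) is P(x1^n,x2^n,y^n) = W^{⊗n}(y^n|x1^n,x2^n) P_{X1^n X2^n}(x1^n,x2^n). Then: I(X1^n : Y^n | X2^n) ≤ Σ_{i=1}^n I(X_{1,i} : Y_i | X_{2,i}), I(X2^n : Y^n | X1^n) ≤ Σ_{i=1}^n I(X_{2,i} : Y_i | X_{1,i}), and I((X1^n, X2^n) : Y^n) ≤ Σ_{i=1}^n I((X_{1,i}, X_{2,i}) : Y_i). -/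

import Mathlib

open Finset

/-- The `n`-fold memoryless extension `W^{⊗n}` of a multiple-access channel `W`. -/
def macPow {X1 X2 Y : Type*} (n : ℕ) (W : X1 → X2 → Y → ℝ) :
    (Fin n → X1) → (Fin n → X2) → (Fin n → Y) → ℝ :=
  fun x1 x2 y => ∏ i, W (x1 i) (x2 i) (y i)

/-- Shannon entropy (in bits) of a finitely supported distribution `f`. -/
noncomputable def H2 {T : Type*} [Fintype T] (f : T → ℝ) : ℝ :=
  ∑ t, -(f t * Real.logb 2 (f t))

/-- `I(X1:Y|X2)` for a joint distribution `μ` of `(X1,X2,Y)`, via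
`I(X:Y|Z) = H(X,Z) + H(Y,Z) − H(Z) − H(X,Y,Z)`. -/
noncomputable def miX1YcX2 {X1 X2 Y : Type*} [Fintype X1] [Fintype X2] [Fintype Y]
    (μ : X1 → X2 → Y → ℝ) : ℝ :=
  H2 (fun q : X1 × X2 => ∑ y, μ q.1 q.2 y)
    + H2 (fun q : X2 × Y => ∑ x1, μ x1 q.1 q.2)
    - H2 (fun x2 : X2 => ∑ x1, ∑ y, μ x1 x2 y)
    - H2 (fun q : X1 × X2 × Y => μ q.1 q.2.1 q.2.2)

/-- `I(X2:Y|X1)` for a joint distribution `μ` of `(X1,X2,Y)`. -/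
noncomputable def miX2YcX1 {X1 X2 Y : Type*} [Fintype X1] [Fintype X2] [Fintype Y]
    (μ : X1 → X2 → Y → ℝ) : ℝ :=
  H2 (fun q : X1 × X2 => ∑ y, μ q.1 q.2 y)
    + H2 (fun q : X1 × Y => ∑ x2, μ q.1 x2 q.2)
    - H2 (fun x1 : X1 => ∑ x2, ∑ y, μ x1 x2 y)
    - H2 (fun q : X1 × X2 × Y => μ q.1 q.2.1 q.2.2)

/-- `I((X1,X2):Y)` for a joint distribution `μ` of `(X1,X2,Y)`, via
`I(X:Y) = H(X) + H(Y) − H(X,Y)`. -/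
noncomputable def miX1X2Y {X1 X2 Y : Type*} [Fintype X1] [Fintype X2] [Fintype Y]
    (μ : X1 → X2 → Y → ℝ) : ℝ :=
  H2 (fun q : X1 × X2 => ∑ y, μ q.1 q.2 y)
    + H2 (fun y : Y => ∑ x1, ∑ x2, μ x1 x2 y)
    - H2 (fun q : X1 × X2 × Y => μ q.1 q.2.1 q.2.2)

/-- The joint distribution of the `i`-th coordinates `(X_{1,i}, X_{2,i}, Y_i)` under
a joint distribution `μ` of `(X1^n, X2^n, Y^n)`. -/
noncomputable def margAt {X1 X2 Y : Type*} [Fintype X1] [Fintype X2] [Fintype Y]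
    [DecidableEq X1] [DecidableEq X2] [DecidableEq Y] {n : ℕ}
    (μ : (Fin n → X1) → (Fin n → X2) → (Fin n → Y) → ℝ) (i : Fin n) :
    X1 → X2 → Y → ℝ :=
  fun a b c => ∑ x1, ∑ x2, ∑ y,
    if x1 i = a ∧ x2 i = b ∧ y i = c then μ x1 x2 y else 0

/-!
Write `μ = W^{⊗n}(y | x1, x2) P(x1, x2)`. Both `μ` and each single-letter marginal of `μ` have the
form `channel × input`, with channels `W^{⊗n}` and `W`, so by the chain rule
`H(X1^n X2^n Y^n) - H(X1^n X2^n) = Σᵢ (H(X1ᵢ X2ᵢ Yᵢ) - H(X1ᵢ X2ᵢ))`: the conditional entropy of the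
output given both inputs is exactly additive. Each of the three mutual informations is an output
entropy (conditioned on `X2`, on `X1`, or on nothing) minus that term, so the claims reduce to
`H(Y^n | Z^n) ≤ Σᵢ H(Yᵢ | Zᵢ)` and `H(Y^n) ≤ Σᵢ H(Yᵢ)`. These follow from Gibbs' inequality
against the reference distributions `P(z) ∏ᵢ P(yᵢ | zᵢ)` and `∏ᵢ P(yᵢ)`. The bound for
`I(X2^n : Y^n | X1^n)` is the one for `I(X1^n : Y^n | X2^n)` with the two senders exchanged.
-/

open Real

section Entropy

variable {T : Type*} [Fintype T]

lemma H2_comp_equiv {S : Type*} [Fintype S] (e : T ≃ S) (f : S → ℝ) : H2 (f ∘ e) = H2 f :=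
  e.sum_comp fun s => -(f s * logb 2 (f s))

lemma H2_le_sum_neg_mul_logb (p q : T → ℝ) (hp : ∀ t, 0 ≤ p t) (hq : ∀ t, 0 ≤ q t)
    (hpq : ∀ t, 0 < p t → 0 < q t) (hsum : ∑ t, q t ≤ ∑ t, p t) :
    H2 p ≤ ∑ t, -(p t * logb 2 (q t)) := by
  have hlog2 : 0 < log 2 := log_pos one_lt_two
  have hterm : ∀ t, -(p t * logb 2 (p t)) ≤ -(p t * logb 2 (q t)) + (q t - p t) / log 2 := by
    intro t
    rcases (hp t).eq_or_lt with h | h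
    · simpa [← h] using div_nonneg (hq t) hlog2.le
    · have hqt := hpq t h
      have key : p t * (log (q t) - log (p t)) ≤ q t - p t := by
        have := mul_le_mul_of_nonneg_left (log_le_sub_one_of_pos (div_pos hqt h)) h.le
        rwa [log_div hqt.ne' h.ne', mul_sub_one, mul_div_cancel₀ _ h.ne'] at this
      calc -(p t * logb 2 (p t))
          = -(p t * logb 2 (q t)) + p t * (log (q t) - log (p t)) / log 2 := by
            simp only [logb]; ring
        _ ≤ -(p t * logb 2 (q t)) + (q t - p t) / log 2 := by gcongr
  calc H2 p ≤ ∑ t, (-(p t * logb 2 (q t)) + (q t - p t) / log 2) := sum_le_sum fun t _ => hterm t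
    _ = ∑ t, -(p t * logb 2 (q t)) + (∑ t, q t - ∑ t, p t) / log 2 := by
      rw [sum_add_distrib, ← sum_div, sum_sub_distrib]
    _ ≤ ∑ t, -(p t * logb 2 (q t)) :=
      add_le_of_nonpos_right (div_nonpos_of_nonpos_of_nonneg (sub_nonpos.2 hsum) hlog2.le)

end Entropy

section ChainRule

variable {A B C : Type*} [Fintype A] [Fintype B] [Fintype C]

lemma H2_eq_H2_sum_add (f K : A × C → ℝ) (hf : ∀ a c, f (a, c) = K (a, c) * ∑ c', f (a, c')) :
    H2 f = H2 (fun a => ∑ c, f (a, c)) + ∑ q, -(f q * logb 2 (K q)) := by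
  have hterm : ∀ a c, -(f (a, c) * logb 2 (f (a, c)))
      = -(f (a, c) * logb 2 (K (a, c))) - f (a, c) * logb 2 (∑ c', f (a, c')) := by
    intro a c
    by_cases h : f (a, c) = 0
    · simp [h]
    · rw [hf a c] at h ⊢
      rw [logb_mul (left_ne_zero_of_mul h) (right_ne_zero_of_mul h)]
      ring
  simp only [H2, Fintype.sum_prod_type, hterm, sum_sub_distrib, ← sum_mul, sum_neg_distrib]
  ring

lemma H2_eq_H2_sum_add₃ (μ K : A → B → C → ℝ) (hμ : ∀ a b c, μ a b c = K a b c * ∑ c', μ a b c') :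
    H2 (fun q : A × B × C => μ q.1 q.2.1 q.2.2)
      = H2 (fun q : A × B => ∑ c, μ q.1 q.2 c)
        + ∑ q : A × B × C, -(μ q.1 q.2.1 q.2.2 * logb 2 (K q.1 q.2.1 q.2.2)) := by
  rw [← H2_comp_equiv (Equiv.prodAssoc A B C),
    ← (Equiv.prodAssoc A B C).sum_comp]
  exact H2_eq_H2_sum_add (fun q : (A × B) × C => μ q.1.1 q.1.2 q.2)
    (fun q => K q.1.1 q.1.2 q.2) fun ab c => hμ ab.1 ab.2 c

end ChainRule

section CondDist

variable {B C : Type*} [Fintype C]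

-- `0` on rows of total mass `0` (division by zero), so rows sum to at most `1`.
noncomputable def condDist (m : B × C → ℝ) (q : B × C) : ℝ := m q / ∑ c, m (q.1, c)

variable {m : B × C → ℝ}

lemma condDist_nonneg (hm : ∀ q, 0 ≤ m q) (q : B × C) : 0 ≤ condDist m q :=
  div_nonneg (hm q) (sum_nonneg fun _ _ => hm _)

lemma condDist_pos (hm : ∀ q, 0 ≤ m q) {q : B × C} (hq : 0 < m q) : 0 < condDist m q :=
  div_pos hq (hq.trans_le (single_le_sum (f := fun c => m (q.1, c)) (fun _ _ => hm _)
    (mem_univ q.2)))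

lemma sum_condDist_le_one (b : B) : ∑ c, condDist m (b, c) ≤ 1 := by
  simp only [condDist, ← sum_div]
  exact div_self_le_one _

lemma sum_prod_condDist_le_one {ι : Type*} [Fintype ι] [DecidableEq ι] {m : ι → B × C → ℝ}
    (hm : ∀ i q, 0 ≤ m i q) (z : ι → B) : ∑ y : ι → C, ∏ i, condDist (m i) (z i, y i) ≤ 1 := by
  rw [← Fintype.prod_sum fun i c => condDist (m i) (z i, c)]
  exact prod_le_one (fun i _ => sum_nonneg fun _ _ => condDist_nonneg (hm i) _)
    fun i _ => sum_condDist_le_one _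

lemma H2_sub_H2_sum_eq [Fintype B] (hm : ∀ q, 0 ≤ m q) :
    H2 m - H2 (fun b => ∑ c, m (b, c)) = ∑ q, -(m q * logb 2 (condDist m q)) := by
  rw [H2_eq_H2_sum_add m (condDist m) fun b c => (div_mul_cancel_of_imp fun h =>
    (sum_eq_zero_iff_of_nonneg fun c _ => hm _).1 h c (mem_univ c)).symm]
  ring

end CondDist

section Pushforward

variable {T S : Type*} [Fintype T] [DecidableEq S]

def pushforward (g : T → S) (f : T → ℝ) (s : S) : ℝ := ∑ t with g t = s, f t

lemma pushforward_nonneg {g : T → S} {f : T → ℝ} (hf : ∀ t, 0 ≤ f t) (s : S) :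
    0 ≤ pushforward g f s :=
  sum_nonneg fun t _ => hf t

lemma le_pushforward {g : T → S} {f : T → ℝ} (hf : ∀ t, 0 ≤ f t) (t : T) :
    f t ≤ pushforward g f (g t) :=
  single_le_sum (fun t _ => hf t) (by simp)

variable [Fintype S]

lemma sum_pushforward (g : T → S) (f : T → ℝ) : ∑ s, pushforward g f s = ∑ t, f t :=
  sum_fiberwise univ g f

lemma sum_pushforward_mul (g : T → S) (f : T → ℝ) (φ : S → ℝ) :
    ∑ s, pushforward g f s * φ s = ∑ t, f t * φ (g t) := by
  rw [← sum_fiberwise univ g fun t => f t * φ (g t)]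
  refine sum_congr rfl fun s _ => ?_
  rw [pushforward, sum_mul]
  exact sum_congr rfl fun t ht => by rw [(mem_filter.1 ht).2]

end Pushforward

lemma pushforward_eval_prod {ι Y : Type*} [Fintype ι] [DecidableEq ι] [Fintype Y] [DecidableEq Y]
    (f : ι → Y → ℝ) (hf : ∀ j, ∑ d, f j d = 1) (i : ι) (c : Y) :
    pushforward (fun y : ι → Y => y i) (fun y => ∏ j, f j (y j)) c = f i c := by
  have hfilter : ({y : ι → Y | y i = c} : Finset _)
      = Fintype.piFinset fun j => if j = i then {c} else univ := by
    ext y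
    simp only [mem_filter, mem_univ, true_and, Fintype.mem_piFinset]
    refine ⟨fun h j => ?_, fun h => by simpa using h i⟩
    split_ifs with hj
    · simp [hj, h]
    · exact mem_univ _
  rw [pushforward, hfilter, ← prod_univ_sum, Fintype.prod_eq_single i fun j hj => by simp [hj, hf]]
  simp

lemma mul_logb_prod {ι : Type*} (s : Finset ι) (p : ℝ) (q : ι → ℝ)
    (hq : p ≠ 0 → ∀ i ∈ s, q i ≠ 0) :
    p * logb 2 (∏ i ∈ s, q i) = ∑ i ∈ s, p * logb 2 (q i) := by
  by_cases hp : p = 0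
  · simp [hp]
  · rw [logb_prod s q (hq hp), mul_sum]

section Subadditivity

variable {Z Y : Type*} [Fintype Z] [Fintype Y] [DecidableEq Z] [DecidableEq Y]
  {ι : Type*} [Fintype ι] [DecidableEq ι]

lemma H2_le_sum_H2_pushforward_eval (f : (ι → Y) → ℝ) (hf : ∀ y, 0 ≤ f y)
    (hf1 : ∑ y, f y = 1) : H2 f ≤ ∑ i, H2 (pushforward (fun y => y i) f) := by
  set m := fun i => pushforward (fun y : ι → Y => y i) f
  have hm : ∀ i c, 0 ≤ m i c := fun i => pushforward_nonneg hf
  have hpos : ∀ y, 0 < f y → ∀ i, 0 < m i (y i) := fun y hy i =>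
    hy.trans_le (le_pushforward hf y)
  have hsum : ∑ y : ι → Y, ∏ i, m i (y i) ≤ ∑ y, f y := by
    simp [m, ← Fintype.prod_sum, sum_pushforward, hf1]
  calc H2 f ≤ ∑ y, -(f y * logb 2 (∏ i, m i (y i))) :=
        H2_le_sum_neg_mul_logb f _ hf (fun y => prod_nonneg fun i _ => hm i _)
          (fun y hy => prod_pos fun i _ => hpos y hy i) hsum
    _ = ∑ i, ∑ y, -(f y * logb 2 (m i (y i))) := by
        rw [sum_comm]
        refine sum_congr rfl fun y _ => ?_
        rw [mul_logb_prod _ _ _ fun hy i _ => (hpos y ((hf y).lt_of_ne' hy) i).ne',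
          sum_neg_distrib]
    _ = ∑ i, H2 (m i) := by
        simp only [H2, sum_neg_distrib, sum_pushforward_mul, m]

lemma H2_sub_H2_le_sum (p : (ι → Z) × (ι → Y) → ℝ) (hp : ∀ q, 0 ≤ p q) :
    H2 p - H2 (fun z => ∑ y, p (z, y))
      ≤ ∑ i, (H2 (pushforward (fun q => (q.1 i, q.2 i)) p)
          - H2 (fun b => ∑ c, pushforward (fun q => (q.1 i, q.2 i)) p (b, c))) := by
  set m := fun i => pushforward (fun q : (ι → Z) × (ι → Y) => (q.1 i, q.2 i)) p
  set r := fun z => ∑ y, p (z, y)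
  have hm : ∀ i q, 0 ≤ m i q := fun i => pushforward_nonneg hp
  have hr : ∀ z, 0 ≤ r z := fun z => sum_nonneg fun _ _ => hp _
  set ref := fun q : (ι → Z) × (ι → Y) => r q.1 * ∏ i, condDist (m i) (q.1 i, q.2 i)
  have hpos : ∀ q, 0 < p q → 0 < r q.1 ∧ ∀ i, 0 < condDist (m i) (q.1 i, q.2 i) := fun q hq =>
    ⟨hq.trans_le (single_le_sum (f := fun y => p (q.1, y)) (fun _ _ => hp _) (mem_univ q.2)),
      fun i => condDist_pos (hm i) (hq.trans_le (le_pushforward hp q))⟩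
  have hsum : ∑ q, ref q ≤ ∑ q, p q := by
    simp only [ref, Fintype.sum_prod_type, ← mul_sum]
    exact sum_le_sum fun z _ => mul_le_of_le_one_right (hr z) (sum_prod_condDist_le_one hm z)
  have hsplit : ∀ q, -(p q * logb 2 (ref q))
      = -(p q * logb 2 (r q.1)) + ∑ i, -(p q * logb 2 (condDist (m i) (q.1 i, q.2 i))) := by
    intro q
    by_cases h : p q = 0
    · simp [h]
    · obtain ⟨hrq, hcq⟩ := hpos q ((hp q).lt_of_ne' h)
      rw [logb_mul hrq.ne' (prod_pos fun i _ => hcq i).ne', mul_add,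
        mul_logb_prod _ _ _ fun _ i _ => (hcq i).ne', neg_add, sum_neg_distrib]
  have hcross : ∑ q, -(p q * logb 2 (r q.1)) = H2 r := by
    simp only [H2, Fintype.sum_prod_type, sum_neg_distrib, ← sum_mul, r]
  calc H2 p - H2 r ≤ ∑ q, -(p q * logb 2 (ref q)) - H2 r := by
        gcongr
        exact H2_le_sum_neg_mul_logb p ref hp (fun q => mul_nonneg (hr _) (prod_nonneg
          fun i _ => condDist_nonneg (hm i) _)) (fun q hq => mul_pos (hpos q hq).1
          (prod_pos fun i _ => (hpos q hq).2 i)) hsum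
    _ = ∑ i, ∑ q, -(p q * logb 2 (condDist (m i) (q.1 i, q.2 i))) := by
        rw [sum_congr rfl fun q _ => hsplit q, sum_add_distrib, hcross, sum_comm]
        ring
    _ = ∑ i, (H2 (m i) - H2 (fun b => ∑ c, m i (b, c))) := by
        refine sum_congr rfl fun i _ => ?_
        rw [H2_sub_H2_sum_eq (hm i)]
        simp only [sum_neg_distrib, sum_pushforward_mul, m]

end Subadditivity

section MutualInformation

variable {X1 X2 Y : Type*} [Fintype X1] [Fintype X2] [Fintype Y]

lemma miX1YcX2_eq_of_factor (μ K : X1 → X2 → Y → ℝ)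
    (hμ : ∀ a b c, μ a b c = K a b c * ∑ c', μ a b c') :
    miX1YcX2 μ = H2 (fun q : X2 × Y => ∑ a, μ a q.1 q.2) - H2 (fun b => ∑ c, ∑ a, μ a b c)
      - ∑ q : X1 × X2 × Y, -(μ q.1 q.2.1 q.2.2 * logb 2 (K q.1 q.2.1 q.2.2)) := by
  simp only [miX1YcX2, H2_eq_H2_sum_add₃ μ K hμ, sum_comm (γ := Y)]
  ring

lemma miX1X2Y_eq_of_factor (μ K : X1 → X2 → Y → ℝ)
    (hμ : ∀ a b c, μ a b c = K a b c * ∑ c', μ a b c') :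
    miX1X2Y μ = H2 (fun c => ∑ a, ∑ b, μ a b c)
      - ∑ q : X1 × X2 × Y, -(μ q.1 q.2.1 q.2.2 * logb 2 (K q.1 q.2.1 q.2.2)) := by
  rw [miX1X2Y, H2_eq_H2_sum_add₃ μ K hμ]
  ring

lemma miX2YcX1_eq_miX1YcX2_swap (μ : X1 → X2 → Y → ℝ) :
    miX2YcX1 μ = miX1YcX2 fun b a c => μ a b c := by
  have hpair : H2 (fun q : X2 × X1 => ∑ c, μ q.2 q.1 c)
      = H2 fun q : X1 × X2 => ∑ c, μ q.1 q.2 c := by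
    simp only [H2, Fintype.sum_prod_type]
    exact sum_comm
  have htriple : H2 (fun q : X2 × X1 × Y => μ q.2.1 q.1 q.2.2)
      = H2 fun q : X1 × X2 × Y => μ q.1 q.2.1 q.2.2 := by
    simp only [H2, Fintype.sum_prod_type]
    exact sum_comm
  rw [miX2YcX1, miX1YcX2, hpair, htriple]

end MutualInformation

section Marginals

variable {X1 X2 Y : Type*} [Fintype X1] [Fintype X2] [Fintype Y]
  [DecidableEq X1] [DecidableEq X2] [DecidableEq Y] {n : ℕ}

lemma margAt_eq_pushforward (μ : (Fin n → X1) → (Fin n → X2) → (Fin n → Y) → ℝ) (i : Fin n)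
    (a : X1) (b : X2) (c : Y) :
    margAt μ i a b c = pushforward (fun q : (Fin n → X1) × (Fin n → X2) × (Fin n → Y) =>
      (q.1 i, q.2.1 i, q.2.2 i))
      (fun q => μ q.1 q.2.1 q.2.2) (a, b, c) := by
  simp only [margAt, pushforward, sum_filter, Fintype.sum_prod_type, Prod.ext_iff]

lemma sum_margAt_mul (μ : (Fin n → X1) → (Fin n → X2) → (Fin n → Y) → ℝ) (i : Fin n)
    (φ : X1 × X2 × Y → ℝ) :
    ∑ q : X1 × X2 × Y, margAt μ i q.1 q.2.1 q.2.2 * φ q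
      = ∑ q : (Fin n → X1) × (Fin n → X2) × (Fin n → Y),
          μ q.1 q.2.1 q.2.2 * φ (q.1 i, q.2.1 i, q.2.2 i) := by
  simp only [margAt_eq_pushforward, Prod.mk.eta]
  exact sum_pushforward_mul _ _ φ

lemma sum_margAt_left (μ : (Fin n → X1) → (Fin n → X2) → (Fin n → Y) → ℝ) (i : Fin n) (b : X2)
    (c : Y) :
    ∑ a, margAt μ i a b c = ∑ x1, ∑ x2, ∑ y, if x2 i = b ∧ y i = c then μ x1 x2 y else 0 := by
  unfold margAt
  rw [sum_comm]
  simp only [ite_and, sum_ite_irrel, sum_const_zero, sum_ite_eq, mem_univ, if_true]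

lemma pushforward_sum_eq_sum_margAt (μ : (Fin n → X1) → (Fin n → X2) → (Fin n → Y) → ℝ)
    (i : Fin n) :
    pushforward (fun q : (Fin n → X2) × (Fin n → Y) => (q.1 i, q.2 i))
      (fun q => ∑ x1, μ x1 q.1 q.2) = fun q => ∑ a, margAt μ i a q.1 q.2 := by
  ext ⟨b, c⟩
  simp only [sum_margAt_left, pushforward, sum_filter, ite_sum_zero]
  rw [sum_comm]
  simp only [Fintype.sum_prod_type, Prod.ext_iff]

lemma pushforward_sum_sum_eq_sum_sum_margAt
    (μ : (Fin n → X1) → (Fin n → X2) → (Fin n → Y) → ℝ) (i : Fin n) :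
    pushforward (fun y : Fin n → Y => y i) (fun y => ∑ x1, ∑ x2, μ x1 x2 y)
      = fun c => ∑ a, ∑ b, margAt μ i a b c := by
  ext c
  calc pushforward (fun y : Fin n → Y => y i) (fun y => ∑ x1, ∑ x2, μ x1 x2 y) c
      = ∑ x1, ∑ x2, ∑ y, if y i = c then μ x1 x2 y else 0 := by
        simp only [pushforward, sum_filter, ite_sum_zero]
        rw [sum_comm]
        refine sum_congr rfl fun x1 _ => ?_
        exact sum_comm
    _ = ∑ b, ∑ x1, ∑ x2, ∑ y, if x2 i = b ∧ y i = c then μ x1 x2 y else 0 := by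
        conv_rhs => rw [sum_comm]
        refine sum_congr rfl fun x1 _ => ?_
        conv_rhs => rw [sum_comm]
        simp only [ite_and, sum_ite_irrel, sum_const_zero, sum_ite_eq, mem_univ, if_true]
    _ = ∑ a, ∑ b, margAt μ i a b c := by
        conv_rhs => rw [sum_comm]
        simp only [sum_margAt_left]

lemma margAt_swap (μ : (Fin n → X1) → (Fin n → X2) → (Fin n → Y) → ℝ) (i : Fin n) :
    margAt (fun x2 x1 y => μ x1 x2 y) i = fun b a c => margAt μ i a b c := by
  ext b a c
  simp only [margAt, and_left_comm (a := _ = b)]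
  exact sum_comm

end Marginals

section MacJoint

variable {X1 X2 Y : Type*} {n : ℕ} {W : X1 → X2 → Y → ℝ} {P : (Fin n → X1) → (Fin n → X2) → ℝ}

def macJoint (n : ℕ) (W : X1 → X2 → Y → ℝ) (P : (Fin n → X1) → (Fin n → X2) → ℝ) :
    (Fin n → X1) → (Fin n → X2) → (Fin n → Y) → ℝ :=
  fun x1 x2 y => macPow n W x1 x2 y * P x1 x2

lemma macJoint_nonneg (hW0 : ∀ a b c, 0 ≤ W a b c) (hP0 : ∀ x1 x2, 0 ≤ P x1 x2)
    (x1 : Fin n → X1) (x2 : Fin n → X2) (y : Fin n → Y) : 0 ≤ macJoint n W P x1 x2 y :=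
  mul_nonneg (prod_nonneg fun _ _ => hW0 _ _ _) (hP0 x1 x2)

variable [Fintype Y]

lemma sum_macJoint (hW1 : ∀ a b, ∑ c, W a b c = 1) (x1 : Fin n → X1) (x2 : Fin n → X2) :
    ∑ y, macJoint n W P x1 x2 y = P x1 x2 := by
  simp only [macJoint, macPow, ← sum_mul, ← Fintype.prod_sum fun j c => W (x1 j) (x2 j) c, hW1,
    prod_const_one, one_mul]

lemma macJoint_eq_mul_sum (hW1 : ∀ a b, ∑ c, W a b c = 1) (x1 : Fin n → X1) (x2 : Fin n → X2)
    (y : Fin n → Y) :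
    macJoint n W P x1 x2 y = macPow n W x1 x2 y * ∑ y', macJoint n W P x1 x2 y' := by
  rw [sum_macJoint hW1]
  rfl

variable [Fintype X1] [Fintype X2] [DecidableEq X1] [DecidableEq X2] [DecidableEq Y]

lemma margAt_macJoint (hW1 : ∀ a b, ∑ c, W a b c = 1) (i : Fin n) (a : X1) (b : X2) (c : Y) :
    margAt (macJoint n W P) i a b c
      = W a b c * ∑ x1, ∑ x2, if x1 i = a ∧ x2 i = b then P x1 x2 else 0 := by
  simp only [margAt, macJoint, mul_sum]
  refine sum_congr rfl fun x1 _ => sum_congr rfl fun x2 _ => ?_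
  by_cases hab : x1 i = a ∧ x2 i = b
  · obtain ⟨rfl, rfl⟩ := hab
    have h := pushforward_eval_prod (fun j c => W (x1 j) (x2 j) c) (fun j => hW1 _ _) i c
    simp only [pushforward, sum_filter] at h
    simp only [true_and, if_true, ← h, ite_mul, zero_mul, sum_mul, macPow]
  · rw [if_neg hab, mul_zero]
    exact sum_eq_zero fun y _ => if_neg fun h => hab ⟨h.1, h.2.1⟩

lemma margAt_macJoint_eq_mul_sum (hW1 : ∀ a b, ∑ c, W a b c = 1) (i : Fin n) (a : X1) (b : X2)
    (c : Y) :
    margAt (macJoint n W P) i a b c = W a b c * ∑ c', margAt (macJoint n W P) i a b c' := by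
  simp only [margAt_macJoint hW1, ← sum_mul, hW1, one_mul]

lemma sum_neg_macJoint_mul_logb_macPow :
    ∑ q : (Fin n → X1) × (Fin n → X2) × (Fin n → Y),
        -(macJoint n W P q.1 q.2.1 q.2.2 * logb 2 (macPow n W q.1 q.2.1 q.2.2))
      = ∑ i, ∑ q : X1 × X2 × Y,
          -(margAt (macJoint n W P) i q.1 q.2.1 q.2.2 * logb 2 (W q.1 q.2.1 q.2.2)) := by
  have hsplit : ∀ x1 x2 y, macJoint n W P x1 x2 y * logb 2 (macPow n W x1 x2 y)
      = ∑ i, macJoint n W P x1 x2 y * logb 2 (W (x1 i) (x2 i) (y i)) := fun x1 x2 y =>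
    mul_logb_prod _ _ _ fun h => prod_ne_zero_iff.1 (left_ne_zero_of_mul h)
  simp only [hsplit, sum_neg_distrib, sum_margAt_mul]
  rw [sum_comm]

end MacJoint

section SingleLetterization

variable {X1 X2 Y : Type*} [Fintype X1] [Fintype X2] [Fintype Y]
  [DecidableEq X1] [DecidableEq X2] [DecidableEq Y] {n : ℕ}
  {W : X1 → X2 → Y → ℝ} {P : (Fin n → X1) → (Fin n → X2) → ℝ}

theorem miX1YcX2_macJoint_le (hW0 : ∀ a b c, 0 ≤ W a b c) (hW1 : ∀ a b, ∑ c, W a b c = 1)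
    (hP0 : ∀ x1 x2, 0 ≤ P x1 x2) :
    miX1YcX2 (macJoint n W P) ≤ ∑ i, miX1YcX2 (margAt (macJoint n W P) i) := by
  have hsub := H2_sub_H2_le_sum (fun q => ∑ x1, macJoint n W P x1 q.1 q.2)
    fun q => sum_nonneg fun _ _ => macJoint_nonneg hW0 hP0 _ _ _
  simp only [pushforward_sum_eq_sum_margAt, sum_sub_distrib] at hsub
  rw [miX1YcX2_eq_of_factor _ _ (macJoint_eq_mul_sum hW1), sum_neg_macJoint_mul_logb_macPow]
  simp only [miX1YcX2_eq_of_factor _ _ (margAt_macJoint_eq_mul_sum hW1 _), sum_sub_distrib]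
  linarith

theorem miX1X2Y_macJoint_le (hW0 : ∀ a b c, 0 ≤ W a b c) (hW1 : ∀ a b, ∑ c, W a b c = 1)
    (hP0 : ∀ x1 x2, 0 ≤ P x1 x2) (hP1 : ∑ x1, ∑ x2, P x1 x2 = 1) :
    miX1X2Y (macJoint n W P) ≤ ∑ i, miX1X2Y (margAt (macJoint n W P) i) := by
  have hsum : ∑ y, ∑ x1, ∑ x2, macJoint n W P x1 x2 y = 1 := by
    rw [sum_comm, ← hP1]
    refine sum_congr rfl fun x1 _ => ?_
    rw [sum_comm]
    exact sum_congr rfl fun x2 _ => sum_macJoint hW1 x1 x2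
  have hsub := H2_le_sum_H2_pushforward_eval (fun y => ∑ x1, ∑ x2, macJoint n W P x1 x2 y)
    (fun y => sum_nonneg fun _ _ => sum_nonneg fun _ _ => macJoint_nonneg hW0 hP0 _ _ _) hsum
  simp only [pushforward_sum_sum_eq_sum_sum_margAt] at hsub
  rw [miX1X2Y_eq_of_factor _ _ (macJoint_eq_mul_sum hW1), sum_neg_macJoint_mul_logb_macPow]
  simp only [miX1X2Y_eq_of_factor _ _ (margAt_macJoint_eq_mul_sum hW1 _), sum_sub_distrib]
  linarith

end SingleLetterization

theorem multiletter_mutualInfo_le_general {X1 X2 Y : Type*}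
    [Fintype X1] [Fintype X2] [Fintype Y]
    [DecidableEq X1] [DecidableEq X2] [DecidableEq Y]
    (W : X1 → X2 → Y → ℝ)
    (hW0 : ∀ x1 x2 y, 0 ≤ W x1 x2 y)
    (hW1 : ∀ x1 x2, ∑ y, W x1 x2 y = 1)
    (n : ℕ)
    (P : (Fin n → X1) → (Fin n → X2) → ℝ)
    (hP0 : ∀ x1 x2, 0 ≤ P x1 x2)
    (hP1 : ∑ x1, ∑ x2, P x1 x2 = 1) :
    miX1YcX2 (fun x1 x2 y => macPow n W x1 x2 y * P x1 x2) ≤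
        ∑ i, miX1YcX2 (margAt (fun x1 x2 y => macPow n W x1 x2 y * P x1 x2) i) ∧
    miX2YcX1 (fun x1 x2 y => macPow n W x1 x2 y * P x1 x2) ≤
        ∑ i, miX2YcX1 (margAt (fun x1 x2 y => macPow n W x1 x2 y * P x1 x2) i) ∧
    miX1X2Y (fun x1 x2 y => macPow n W x1 x2 y * P x1 x2) ≤
        ∑ i, miX1X2Y (margAt (fun x1 x2 y => macPow n W x1 x2 y * P x1 x2) i) := by
  refine ⟨miX1YcX2_macJoint_le hW0 hW1 hP0, ?_, miX1X2Y_macJoint_le hW0 hW1 hP0 hP1⟩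
  have h := miX1YcX2_macJoint_le (W := fun b a c => W a b c) (P := fun x2 x1 => P x1 x2)
    (fun _ _ _ => hW0 _ _ _) (fun _ _ => hW1 _ _) fun _ _ => hP0 _ _
  simp only [miX2YcX1_eq_miX1YcX2_swap, ← margAt_swap]
  exact h

/-- Single-letterization bounds: for any joint input distribution `P` on
`X1^n × X2^n` and `Y^n` the output of `W^{⊗n}`,
`I(X1^n:Y^n|X2^n) ≤ Σ_i I(X_{1,i}:Y_i|X_{2,i})`,
`I(X2^n:Y^n|X1^n) ≤ Σ_i I(X_{2,i}:Y_i|X_{1,i})` and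
`I((X1^n,X2^n):Y^n) ≤ Σ_i I((X_{1,i},X_{2,i}):Y_i)`. -/
theorem multiletter_mutualInfo_le {X1 X2 Y : Type*}
    [Fintype X1] [Fintype X2] [Fintype Y]
    [DecidableEq X1] [DecidableEq X2] [DecidableEq Y]
    (W : X1 → X2 → Y → ℝ)
    (hW0 : ∀ x1 x2 y, 0 ≤ W x1 x2 y)
    (hW1 : ∀ x1 x2, ∑ y, W x1 x2 y = 1)
    (n : ℕ) (hn : 0 < n)
    (P : (Fin n → X1) → (Fin n → X2) → ℝ)
    (hP0 : ∀ x1 x2, 0 ≤ P x1 x2)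
    (hP1 : ∑ x1, ∑ x2, P x1 x2 = 1) :
    miX1YcX2 (fun x1 x2 y => macPow n W x1 x2 y * P x1 x2) ≤
        ∑ i, miX1YcX2 (margAt (fun x1 x2 y => macPow n W x1 x2 y * P x1 x2) i) ∧
    miX2YcX1 (fun x1 x2 y => macPow n W x1 x2 y * P x1 x2) ≤
        ∑ i, miX2YcX1 (margAt (fun x1 x2 y => macPow n W x1 x2 y * P x1 x2) i) ∧
    miX1X2Y (fun x1 x2 y => macPow n W x1 x2 y * P x1 x2) ≤
        ∑ i, miX1X2Y (margAt (fun x1 x2 y => macPow n W x1 x2 y * P x1 x2) i) :=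
  multiletter_mutualInfo_le_general W hW0 hW1 n P hP0 hP1
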